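/- arXiv:2206.04900 — 3 statements merged into one kernel-verified Lean document; each statement's English description precedes it below -/
import Mathlib

section
/- Let Λ = (a_1 > … > a_m ; b_1 > … > b_m) be a symbol with equal row lengths (defect 0), with a_m and b_m not both zero, and with Λ ≠ Λ^t (where Λ^t swaps the two rows). If the rank of Λ is at least 2, then there exists a symbol Λ_1 of rank one less and defect 0 such that Λ is obtained from Λ_1 by increasing exactly one entry by 1 (preserving strict decrease in each row), while Λ^t cannot be obtained from Λ_1 in this way. -/
/-- The shift of one row of a symbol: add 1 to every entry and append a new entry 0. -/
def shiftRow (A : Finset ℕ) : Finset ℕ := insert 0 (A.image (· + 1))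

/-- The simultaneous shift of both rows of a symbol (the symbol equivalence move). -/
def shiftSym (Λ : Finset ℕ × Finset ℕ) : Finset ℕ × Finset ℕ :=
  (shiftRow Λ.1, shiftRow Λ.2)

/-- Two symbols are equivalent if they have a common shift. -/
def SymEquiv (Λ Λ' : Finset ℕ × Finset ℕ) : Prop :=
  ∃ k l : ℕ, shiftSym^[k] Λ = shiftSym^[l] Λ'

/-- `Λ'` is obtained from `Λ` by increasing exactly one entry of one row by 1
(keeping the row a set, i.e. keeping strict decrease of the row). -/
def AddEntry (Λ Λ' : Finset ℕ × Finset ℕ) : Prop :=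
  (∃ a ∈ Λ.1, a + 1 ∉ Λ.1 ∧ Λ' = (insert (a + 1) (Λ.1.erase a), Λ.2)) ∨
  (∃ b ∈ Λ.2, b + 1 ∉ Λ.2 ∧ Λ' = (Λ.1, insert (b + 1) (Λ.2.erase b)))

/-- `Λ ∈ Ω(Λ₁)`: up to the symbol equivalence, `Λ` is obtained from `Λ₁` by
increasing a single entry of one row by 1 (i.e. adding one box to one of the two
partitions associated to `Λ₁`). -/
def InOmega (Λ₁ Λ : Finset ℕ × Finset ℕ) : Prop :=
  ∃ (k : ℕ) (Λ' : Finset ℕ × Finset ℕ), AddEntry (shiftSym^[k] Λ₁) Λ' ∧ SymEquiv Λ' Λ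

/- ### Auxiliary lemmas on `shiftRow` and `shiftSym` -/

lemma mem_shiftRow {A : Finset ℕ} {x : ℕ} :
    x ∈ shiftRow A ↔ x = 0 ∨ ∃ y ∈ A, x = y + 1 := by
  simp [shiftRow, eq_comm]

lemma zero_mem_shiftRow (A : Finset ℕ) : 0 ∈ shiftRow A := by simp [shiftRow]

lemma shiftRow_injective : Function.Injective shiftRow := by
  intro A B h
  ext y
  have : y + 1 ∈ shiftRow A ↔ y + 1 ∈ shiftRow B := by rw [h]
  simpa [mem_shiftRow] using this

lemma card_shiftRow (A : Finset ℕ) : (shiftRow A).card = A.card + 1 := by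
  rw [shiftRow, Finset.card_insert_of_notMem (by simp), Finset.card_image_of_injective _
    (fun a b => by omega)]

lemma sum_shiftRow (A : Finset ℕ) : (shiftRow A).sum id = A.sum id + A.card := by
  rw [shiftRow, Finset.sum_insert (by simp), Finset.sum_image (fun a _ b _ => by omega)]
  simp [Finset.sum_add_distrib]

lemma shiftRow_unshift {S : Finset ℕ} (h0 : 0 ∈ S) :
    shiftRow ((S.erase 0).image (· - 1)) = S := by
  ext x
  simp only [mem_shiftRow, Finset.mem_image, Finset.mem_erase]
  constructor
  · rintro (rfl | ⟨y, ⟨z, ⟨hz0, hz⟩, rfl⟩, rfl⟩)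
    · exact h0
    · have : z - 1 + 1 = z := by omega
      rwa [this]
  · intro hx
    rcases Nat.eq_zero_or_pos x with rfl | hp
    · exact Or.inl rfl
    · exact Or.inr ⟨x - 1, ⟨x, ⟨by omega, hx⟩, rfl⟩, by omega⟩

lemma shiftSym_injective : Function.Injective shiftSym := by
  intro X Y h
  have h1 := congrArg Prod.fst h
  have h2 := congrArg Prod.snd h
  exact Prod.ext (shiftRow_injective h1) (shiftRow_injective h2)

lemma shiftSym_iter_injective (k : ℕ) : Function.Injective (shiftSym^[k]) :=
  Function.Injective.iterate shiftSym_injective k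

lemma card1_shiftSym_iter (X : Finset ℕ × Finset ℕ) (k : ℕ) :
    (shiftSym^[k] X).1.card = X.1.card + k := by
  induction k with
  | zero => rfl
  | succ k ih =>
    rw [Function.iterate_succ_apply']
    show (shiftRow _).card = _
    rw [card_shiftRow, ih]; ring

/-- If `Λ'` is equivalent to a reduced symbol `M`, then `Λ'` is an iterated shift of `M`. -/
lemma symEquiv_reduced {Λ' M : Finset ℕ × Finset ℕ} (h : SymEquiv Λ' M)
    (hM : ¬(0 ∈ M.1 ∧ 0 ∈ M.2)) : ∃ d, Λ' = shiftSym^[d] M := by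
  obtain ⟨l, j, h⟩ := h
  rcases le_or_gt l j with hle | hlt
  · refine ⟨j - l, shiftSym_iter_injective l ?_⟩
    rw [h, ← Function.iterate_add_apply, Nat.add_sub_cancel' hle]
  · exfalso
    have : shiftSym^[j] (shiftSym^[l - j] Λ') = shiftSym^[j] M := by
      rw [← Function.iterate_add_apply, Nat.add_sub_cancel' hlt.le, h]
    have hM' : M = shiftSym^[l - j] Λ' := (shiftSym_iter_injective j this).symm
    obtain ⟨d, hd⟩ : ∃ d, l - j = d + 1 := ⟨l - j - 1, by omega⟩
    rw [hd, Function.iterate_succ_apply'] at hM'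
    exact hM ⟨hM' ▸ zero_mem_shiftRow _, hM' ▸ zero_mem_shiftRow _⟩

lemma addEntry_card {X Y : Finset ℕ × Finset ℕ} (h : AddEntry X Y) :
    X.1.card = Y.1.card ∧ X.2.card = Y.2.card := by
  rcases h with ⟨a, ha, ha1, rfl⟩ | ⟨b, hb, hb1, rfl⟩
  · refine ⟨?_, rfl⟩
    show X.1.card = (insert (a+1) (X.1.erase a)).card
    rw [Finset.card_insert_of_notMem (fun h => ha1 (Finset.mem_of_mem_erase h)),
      Finset.card_erase_of_mem ha]
    have : 0 < X.1.card := Finset.card_pos.2 ⟨a, ha⟩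
    omega
  · refine ⟨rfl, ?_⟩
    show X.2.card = (insert (b+1) (X.2.erase b)).card
    rw [Finset.card_insert_of_notMem (fun h => hb1 (Finset.mem_of_mem_erase h)),
      Finset.card_erase_of_mem hb]
    have : 0 < X.2.card := Finset.card_pos.2 ⟨b, hb⟩
    omega

/- ### Descending an `AddEntry` through a shift -/

lemma row_descend {X1 Y1 : Finset ℕ} {a : ℕ} (ha : a ∈ X1) (ha1 : a + 1 ∉ X1)
    (h1 : shiftRow Y1 = insert (a + 1) (X1.erase a)) :
    ∃ a₀, a = a₀ + 1 ∧ a₀ ∉ Y1 ∧ a ∈ Y1 ∧ X1 = shiftRow (insert a₀ (Y1.erase a)) := by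
  have h0 : (0:ℕ) ∈ insert (a + 1) (X1.erase a) := h1 ▸ zero_mem_shiftRow Y1
  have hane : a ≠ 0 := by
    rcases Finset.mem_insert.1 h0 with h | h
    · omega
    · intro rfl'; exact absurd (Finset.mem_erase.1 h).1 (by simp [rfl'])
  obtain ⟨a₀, rfl⟩ : ∃ a₀, a = a₀ + 1 := ⟨a - 1, by omega⟩
  have haY : a₀ + 1 ∈ Y1 := by
    have : a₀ + 1 + 1 ∈ shiftRow Y1 := by rw [h1]; exact Finset.mem_insert_self _ _
    rcases mem_shiftRow.1 this with h | ⟨y, hy, hy'⟩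
    · omega
    · have : y = a₀ + 1 := by omega
      rwa [← this]
  have hanotS : a₀ + 1 ∉ shiftRow Y1 := by
    rw [h1]
    intro h
    rcases Finset.mem_insert.1 h with h | h
    · omega
    · exact (Finset.mem_erase.1 h).1 rfl
  have ha₀Y : a₀ ∉ Y1 := fun h => hanotS (mem_shiftRow.2 (Or.inr ⟨a₀, h, rfl⟩))
  refine ⟨a₀, rfl, ha₀Y, haY, ?_⟩
  have hX1 : X1 = insert (a₀ + 1) ((shiftRow Y1).erase (a₀ + 1 + 1)) := by
    rw [h1, Finset.erase_insert (fun h => ha1 (Finset.mem_of_mem_erase h)),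
      Finset.insert_erase ha]
  rw [hX1]
  show _ = insert 0 (Finset.image (· + 1) (insert a₀ (Y1.erase (a₀ + 1))))
  rw [Finset.image_insert,
    Finset.image_erase (f := (· + 1)) (fun x y h => by simpa using h) Y1 (a₀ + 1)]
  show insert (a₀+1) ((insert 0 (Finset.image (· + 1) Y1)).erase (a₀+1+1)) = _
  rw [Finset.erase_insert_of_ne (by omega : (0:ℕ) ≠ a₀ + 1 + 1), Finset.insert_comm]

lemma addEntry_descend {X Y : Finset ℕ × Finset ℕ} (h : AddEntry X (shiftSym Y)) :
    ∃ X₀, X = shiftSym X₀ ∧ AddEntry X₀ Y := by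
  rcases h with ⟨a, ha, ha1, hEq⟩ | ⟨a, ha, ha1, hEq⟩
  · have h1 : shiftRow Y.1 = insert (a + 1) (X.1.erase a) := congrArg Prod.fst hEq
    have h2 : shiftRow Y.2 = X.2 := congrArg Prod.snd hEq
    obtain ⟨a₀, rfl, ha₀Y, haY, hX1⟩ := row_descend ha ha1 h1
    refine ⟨(insert a₀ (Y.1.erase (a₀ + 1)), Y.2), Prod.ext hX1 h2.symm, Or.inl ⟨a₀,
      Finset.mem_insert_self _ _, ?_, ?_⟩⟩
    · intro h
      rcases Finset.mem_insert.1 h with h | h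
      · omega
      · exact (Finset.mem_erase.1 h).1 rfl
    · show Y = (_, Y.2)
      refine Prod.ext ?_ rfl
      show Y.1 = insert (a₀ + 1) ((insert a₀ (Y.1.erase (a₀ + 1))).erase a₀)
      rw [Finset.erase_insert (fun h => ha₀Y (Finset.mem_of_mem_erase h)),
        Finset.insert_erase haY]
  · have h1 : shiftRow Y.1 = X.1 := congrArg Prod.fst hEq
    have h2 : shiftRow Y.2 = insert (a + 1) (X.2.erase a) := congrArg Prod.snd hEq
    obtain ⟨a₀, rfl, ha₀Y, haY, hX2⟩ := row_descend ha ha1 h2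
    refine ⟨(Y.1, insert a₀ (Y.2.erase (a₀ + 1))), Prod.ext h1.symm hX2, Or.inr ⟨a₀,
      Finset.mem_insert_self _ _, ?_, ?_⟩⟩
    · intro h
      rcases Finset.mem_insert.1 h with h | h
      · omega
      · exact (Finset.mem_erase.1 h).1 rfl
    · show Y = (Y.1, _)
      refine Prod.ext rfl ?_
      show Y.2 = insert (a₀ + 1) ((insert a₀ (Y.2.erase (a₀ + 1))).erase a₀)
      rw [Finset.erase_insert (fun h => ha₀Y (Finset.mem_of_mem_erase h)),
        Finset.insert_erase haY]

lemma addEntry_descend_iter {d : ℕ} {X Y : Finset ℕ × Finset ℕ}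
    (h : AddEntry X (shiftSym^[d] Y)) : ∃ X₀, X = shiftSym^[d] X₀ ∧ AddEntry X₀ Y := by
  induction d generalizing X with
  | zero => exact ⟨X, rfl, h⟩
  | succ d ih =>
    rw [Function.iterate_succ_apply'] at h
    obtain ⟨X₁, rfl, h₁⟩ := addEntry_descend h
    obtain ⟨X₀, rfl, h₀⟩ := ih h₁
    exact ⟨X₀, (Function.iterate_succ_apply' _ _ _).symm, h₀⟩

/-- For reduced symbols, membership in `Ω` is witnessed without any equivalence on the
target side. -/
lemma inOmega_iff {Λ₁ M : Finset ℕ × Finset ℕ} (h₁ : ¬(0 ∈ Λ₁.1 ∧ 0 ∈ Λ₁.2))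
    (hM : ¬(0 ∈ M.1 ∧ 0 ∈ M.2)) :
    InOmega Λ₁ M ↔ ∃ k, AddEntry (shiftSym^[k] Λ₁) M := by
  constructor
  · rintro ⟨k, Λ', hAdd, hEq⟩
    obtain ⟨d, rfl⟩ := symEquiv_reduced hEq hM
    obtain ⟨X₀, hX₀, hAdd₀⟩ := addEntry_descend_iter hAdd
    rcases le_or_gt d k with hle | hlt
    · refine ⟨k - d, ?_⟩
      have : X₀ = shiftSym^[k - d] Λ₁ := by
        apply shiftSym_iter_injective d
        rw [← hX₀, ← Function.iterate_add_apply, Nat.add_sub_cancel' hle]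
      rwa [← this]
    · exfalso
      have : shiftSym^[k] (shiftSym^[d - k] X₀) = shiftSym^[k] Λ₁ := by
        rw [← Function.iterate_add_apply, Nat.add_sub_cancel' hlt.le, ← hX₀]
      have hL : Λ₁ = shiftSym^[d - k] X₀ := (shiftSym_iter_injective k this).symm
      obtain ⟨e, he⟩ : ∃ e, d - k = e + 1 := ⟨d - k - 1, by omega⟩
      rw [he, Function.iterate_succ_apply'] at hL
      exact h₁ ⟨hL ▸ zero_mem_shiftRow _, hL ▸ zero_mem_shiftRow _⟩
  · rintro ⟨k, hAdd⟩
    exact ⟨k, M, hAdd, 0, 0, rfl⟩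

/- ### Swapping the two rows -/

lemma shiftSym_swap (X : Finset ℕ × Finset ℕ) :
    shiftSym (X.2, X.1) = ((shiftSym X).2, (shiftSym X).1) := rfl

lemma shiftSym_iter_swap (k : ℕ) (X : Finset ℕ × Finset ℕ) :
    shiftSym^[k] (X.2, X.1) = ((shiftSym^[k] X).2, (shiftSym^[k] X).1) := by
  induction k generalizing X with
  | zero => rfl
  | succ k ih =>
    rw [Function.iterate_succ_apply, Function.iterate_succ_apply, shiftSym_swap, ih]

lemma addEntry_swap {X Y : Finset ℕ × Finset ℕ} (h : AddEntry X Y) :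
    AddEntry (X.2, X.1) (Y.2, Y.1) := by
  rcases h with ⟨a, ha, ha1, rfl⟩ | ⟨a, ha, ha1, rfl⟩
  · exact Or.inr ⟨a, ha, ha1, rfl⟩
  · exact Or.inl ⟨a, ha, ha1, rfl⟩

lemma symEquiv_swap {X Y : Finset ℕ × Finset ℕ} (h : SymEquiv X Y) :
    SymEquiv (X.2, X.1) (Y.2, Y.1) := by
  obtain ⟨k, l, h⟩ := h
  exact ⟨k, l, by rw [shiftSym_iter_swap, shiftSym_iter_swap, h]⟩

lemma inOmega_swap {X Y : Finset ℕ × Finset ℕ} (h : InOmega X Y) :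
    InOmega (X.2, X.1) (Y.2, Y.1) := by
  obtain ⟨k, Λ', hAdd, hEq⟩ := h
  exact ⟨k, (Λ'.2, Λ'.1), by rw [shiftSym_iter_swap]; exact addEntry_swap hAdd,
    symEquiv_swap hEq⟩

/- ### The decrement move -/

/-- Decrement move: replace the entry `a+1` of a row by `a`. -/
def dmove (S : Finset ℕ) (a : ℕ) : Finset ℕ := insert a (S.erase (a + 1))

section dmove
variable {S : Finset ℕ} {a : ℕ} (ha : a ∉ S) (ha1 : a + 1 ∈ S)

lemma dmove_mem : a ∈ dmove S a := Finset.mem_insert_self _ _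

lemma dmove_notMem_succ : a + 1 ∉ dmove S a := by
  intro h
  rcases Finset.mem_insert.1 h with h | h
  · omega
  · exact (Finset.mem_erase.1 h).1 rfl

include ha ha1 in
lemma dmove_bump : insert (a + 1) ((dmove S a).erase a) = S := by
  rw [dmove, Finset.erase_insert (fun h => ha (Finset.mem_of_mem_erase h)),
    Finset.insert_erase ha1]

include ha ha1 in
lemma dmove_card : (dmove S a).card = S.card := by
  rw [dmove, Finset.card_insert_of_notMem (fun h => ha (Finset.mem_of_mem_erase h)),
    Finset.card_erase_of_mem ha1]
  have : 0 < S.card := Finset.card_pos.2 ⟨a + 1, ha1⟩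
  omega

include ha ha1 in
lemma dmove_sum : (dmove S a).sum id + 1 = S.sum id := by
  rw [dmove, Finset.sum_insert (fun h => ha (Finset.mem_of_mem_erase h))]
  have h := Finset.sum_erase_add S id ha1
  simp only [id] at h ⊢
  omega

lemma dmove_zero_mem (h0S : 0 ∉ S) (h : 0 ∈ dmove S a) : a = 0 := by
  rcases Finset.mem_insert.1 h with h | h
  · omega
  · exact absurd (Finset.mem_of_mem_erase h) h0S

end dmove

lemma downward_closed_eq_range {B : Finset ℕ} (h : ∀ b, b + 1 ∈ B → b ∈ B) :
    B = Finset.range B.card := by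
  have hdc : ∀ b ∈ B, ∀ k, b - k ∈ B := by
    intro b hb k
    induction k with
    | zero => simpa using hb
    | succ k ih =>
      rcases (by omega : b - (k + 1) + 1 = b - k ∨ b - (k + 1) = b - k) with h' | h'
      · exact h _ (h' ▸ ih)
      · exact h' ▸ ih
  have hsub : B ⊆ Finset.range B.card := by
    intro b hb
    rw [Finset.mem_range]
    have hr : Finset.range (b + 1) ⊆ B := by
      intro c hc
      rw [Finset.mem_range] at hc
      have := hdc b hb (b - c)
      rwa [Nat.sub_sub_self (by omega)] at this
    have := Finset.card_le_card hr
    rw [Finset.card_range] at this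
    omega
  exact Finset.eq_of_subset_of_card_le hsub (by rw [Finset.card_range])

lemma range_sum_twice (m : ℕ) : (Finset.range m).sum id * 2 = m * (m - 1) := by
  simpa using Finset.sum_range_id_mul_two m

/- ### The main construction, assuming `0 ∉ A` -/

lemma main_construction (n m : ℕ) (hn : 2 ≤ n) (A B : Finset ℕ)
    (hA : A.card = m) (hB : B.card = m) (h0A : 0 ∉ A)
    (hrank : A.sum id + B.sum id = n + m * (m - 1)) (hne : A ≠ B) :
    ∃ A₁ B₁ : Finset ℕ, A₁.card = B₁.card ∧ ¬(0 ∈ A₁ ∧ 0 ∈ B₁) ∧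
      A₁.sum id + B₁.sum id = (n - 1) + A₁.card * (A₁.card - 1) ∧
      InOmega (A₁, B₁) (A, B) ∧ ¬ InOmega (A₁, B₁) (B, A) := by
  have hm : 1 ≤ m := by
    rcases Nat.eq_zero_or_pos m with rfl | h
    · exfalso
      apply hne
      rw [Finset.card_eq_zero.1 hA, Finset.card_eq_zero.1 hB]
    · exact h
  by_cases hc1 : ∃ b, b ∉ B ∧ b + 1 ∈ B ∧ dmove B b ≠ A
  · obtain ⟨b, hb, hb1, hbA⟩ := hc1
    refine ⟨A, dmove B b, ?_, ?_, ?_, ?_, ?_⟩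
    · rw [hA, dmove_card hb hb1, hB]
    · rintro ⟨h0, -⟩; exact h0A h0
    · have hs := dmove_sum hb hb1
      rw [hA]
      obtain ⟨P, hP⟩ : ∃ P, P = m * (m - 1) := ⟨_, rfl⟩
      rw [← hP] at hrank ⊢
      omega
    · refine ⟨0, (A, B), Or.inr ⟨b, dmove_mem, dmove_notMem_succ, ?_⟩, 0, 0, rfl⟩
      show (A, B) = (A, insert (b + 1) ((dmove B b).erase b))
      rw [dmove_bump hb hb1]
    · intro h
      rw [inOmega_iff (by rintro ⟨h0, -⟩; exact h0A h0) (by rintro ⟨-, h0⟩; exact h0A h0)] at h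
      obtain ⟨k, hAdd⟩ := h
      have hcard : A.card + k = B.card := by
        have := (addEntry_card hAdd).1
        rwa [card1_shiftSym_iter] at this
      have hk : k = 0 := by rw [hA, hB] at hcard; omega
      subst hk
      rcases hAdd with ⟨x, -, -, hEq⟩ | ⟨x, -, -, hEq⟩
      · exact hbA (congrArg Prod.snd hEq).symm
      · exact hne (congrArg Prod.fst hEq).symm
  · by_cases hc2 : ∃ a, a ∉ A ∧ a + 1 ∈ A ∧ ¬(a = 0 ∧ 0 ∈ B) ∧ dmove A a ≠ B
    · obtain ⟨a, ha, ha1, hcon, haB⟩ := hc2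
      refine ⟨dmove A a, B, ?_, ?_, ?_, ?_, ?_⟩
      · rw [dmove_card ha ha1, hA, hB]
      · rintro ⟨h0, h0B⟩
        exact hcon ⟨dmove_zero_mem h0A h0, h0B⟩
      · have hs := dmove_sum ha ha1
        rw [dmove_card ha ha1, hA]
        obtain ⟨P, hP⟩ : ∃ P, P = m * (m - 1) := ⟨_, rfl⟩
        rw [← hP] at hrank ⊢
        omega
      · refine ⟨0, (A, B), Or.inl ⟨a, dmove_mem, dmove_notMem_succ, ?_⟩, 0, 0, rfl⟩
        show (A, B) = (insert (a + 1) ((dmove A a).erase a), B)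
        rw [dmove_bump ha ha1]
      · intro h
        rw [inOmega_iff (by rintro ⟨h0, h0B⟩; exact hcon ⟨dmove_zero_mem h0A h0, h0B⟩)
          (by rintro ⟨-, h0⟩; exact h0A h0)] at h
        obtain ⟨k, hAdd⟩ := h
        have hcard : (dmove A a).card + k = B.card := by
          have := (addEntry_card hAdd).1
          rwa [card1_shiftSym_iter] at this
        have hk : k = 0 := by rw [dmove_card ha ha1, hA, hB] at hcard; omega
        subst hk
        rcases hAdd with ⟨x, -, -, hEq⟩ | ⟨x, -, -, hEq⟩
        · exact hne (congrArg Prod.snd hEq)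
        · exact haB (congrArg Prod.fst hEq).symm
    · -- Case 3: the only available move passes through the shift.
      push_neg at hc1 hc2
      have hC : ∀ a, a ∉ A → a + 1 ∈ A → dmove A a ≠ B := by
        intro a ha ha1 hEq
        have hs : B.sum id + 1 = A.sum id := by rw [← hEq]; exact dmove_sum ha ha1
        by_cases hb : ∃ b, b ∉ B ∧ b + 1 ∈ B
        · obtain ⟨b, hbn, hb1⟩ := hb
          have h1 := hc1 b hbn hb1
          have hs2 : A.sum id + 1 = B.sum id := by rw [← h1]; exact dmove_sum hbn hb1
          omega
        · push_neg at hb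
          have hdc : ∀ b, b + 1 ∈ B → b ∈ B := by
            intro b h1
            by_contra hb'
            exact (hb b hb') h1
          have hBr := downward_closed_eq_range hdc
          have h2 : B.sum id * 2 = m * (m - 1) := by
            conv_lhs => rw [hBr]
            rw [hB]
            exact range_sum_twice m
          obtain ⟨P, hP⟩ : ∃ P, P = m * (m - 1) := ⟨_, rfl⟩
          rw [← hP] at hrank h2
          omega
      have hApos : 0 < A.card := by omega
      have hAne : A.Nonempty := Finset.card_pos.1 hApos
      have haA : A.min' hAne ∈ A := A.min'_mem hAne
      have hapos : A.min' hAne ≠ 0 := fun h => h0A (h ▸ haA)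
      have ha' : A.min' hAne - 1 ∉ A := by
        intro h
        have := A.min'_le _ h
        omega
      have ha'1 : A.min' hAne - 1 + 1 ∈ A := by
        have h : A.min' hAne - 1 + 1 = A.min' hAne := by omega
        rw [h]; exact haA
      have hkey : A.min' hAne - 1 = 0 ∧ 0 ∈ B := by
        by_contra hcon
        exact hC _ ha' ha'1 (hc2 _ ha' ha'1 (fun h h2 => hcon ⟨h, h2⟩))
      obtain ⟨ha'0, h0B⟩ := hkey
      rw [ha'0] at ha'1
      have h1A : (1:ℕ) ∈ A := by simpa using ha'1
      have hDB : dmove A 0 ≠ B := hC 0 h0A h1A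
      have h0D : 0 ∈ dmove A 0 := dmove_mem
      have h1D : (1:ℕ) ∉ dmove A 0 := dmove_notMem_succ (S := A) (a := 0)
      set A₁ := ((dmove A 0).erase 0).image (· - 1) with hA₁def
      set B₁ := (B.erase 0).image (· - 1) with hB₁def
      have hsh1 : shiftRow A₁ = dmove A 0 := shiftRow_unshift h0D
      have hsh2 : shiftRow B₁ = B := shiftRow_unshift h0B
      have hshift : shiftSym (A₁, B₁) = (dmove A 0, B) := Prod.ext hsh1 hsh2
      have hcardD : (dmove A 0).card = m := by rw [dmove_card h0A h1A, hA]
      have hcA₁ : A₁.card + 1 = m := by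
        have := card_shiftRow A₁
        rw [hsh1, hcardD] at this
        omega
      have hcB₁ : B₁.card + 1 = m := by
        have := card_shiftRow B₁
        rw [hsh2, hB] at this
        omega
      have hsA₁ : A₁.sum id + A₁.card = (dmove A 0).sum id := by
        have := sum_shiftRow A₁
        rw [hsh1] at this
        omega
      have hsB₁ : B₁.sum id + B₁.card = B.sum id := by
        have := sum_shiftRow B₁
        rw [hsh2] at this
        omega
      have hsD : (dmove A 0).sum id + 1 = A.sum id := dmove_sum h0A h1A
      have h0A₁ : 0 ∉ A₁ := by
        rw [hA₁def]
        simp only [Finset.mem_image, Finset.mem_erase]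
        rintro ⟨y, ⟨hy0, hyD⟩, hy1⟩
        have hy : y = 1 := by omega
        rw [hy] at hyD
        exact h1D hyD
      refine ⟨A₁, B₁, by omega, fun h => h0A₁ h.1, ?_, ?_, ?_⟩
      · obtain ⟨P, hP⟩ : ∃ P, P = m * (m - 1) := ⟨_, rfl⟩
        obtain ⟨Q, hQ⟩ : ∃ Q, Q = A₁.card * (A₁.card - 1) := ⟨_, rfl⟩
        have hPQ : P = Q + 2 * A₁.card := by
          rw [hP, hQ, ← hcA₁]
          generalize A₁.card = c
          cases c with
          | zero => simp
          | succ j => simp [Nat.succ_sub_one]; ring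
        rw [← hP] at hrank
        rw [← hQ]
        omega
      · refine ⟨1, (A, B), ?_, 0, 0, rfl⟩
        rw [Function.iterate_one, hshift]
        refine Or.inl ⟨0, h0D, h1D, ?_⟩
        show (A, B) = (insert (0 + 1) ((dmove A 0).erase 0), B)
        rw [dmove_bump h0A h1A]
      · intro h
        rw [inOmega_iff (fun hh => h0A₁ hh.1) (fun hh => h0A hh.2)] at h
        obtain ⟨k, hAdd⟩ := h
        have hcard : A₁.card + k = B.card := by
          have := (addEntry_card hAdd).1
          rwa [card1_shiftSym_iter] at this
        have hk : k = 1 := by rw [hB] at hcard; omega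
        subst hk
        rw [Function.iterate_one, hshift] at hAdd
        rcases hAdd with ⟨x, -, -, hEq⟩ | ⟨x, -, -, hEq⟩
        · exact hne (congrArg Prod.snd hEq)
        · exact hDB (congrArg Prod.fst hEq).symm

/-- Let `Λ = (A; B)` be a reduced symbol of defect 0 (equal row lengths `m`, not both
rows containing 0) of rank `n = ΣA + ΣB - m(m-1) ≥ 2` with `Λ ≠ Λᵗ`.  Then there is a
defect-0 symbol `Λ₁` of rank `n - 1` with `Λ ∈ Ω(Λ₁)` and `Λᵗ ∉ Ω(Λ₁)`. -/
theorem stmt8 (n m : ℕ) (hn : 2 ≤ n) (A B : Finset ℕ)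
    (hcard : A.card = m ∧ B.card = m)
    (hred : ¬(0 ∈ A ∧ 0 ∈ B))
    (hrank : A.sum id + B.sum id = n + m * (m - 1))
    (hne : A ≠ B) :
    ∃ A₁ B₁ : Finset ℕ, A₁.card = B₁.card ∧ ¬(0 ∈ A₁ ∧ 0 ∈ B₁) ∧
      A₁.sum id + B₁.sum id = (n - 1) + A₁.card * (A₁.card - 1) ∧
      InOmega (A₁, B₁) (A, B) ∧ ¬ InOmega (A₁, B₁) (B, A) := by
  obtain ⟨hA, hB⟩ := hcard
  by_cases h0A : 0 ∉ A
  · exact main_construction n m hn A B hA hB h0A hrank hne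
  · have h0B : 0 ∉ B := fun h => hred ⟨not_not.1 (fun h' => h0A h'), h⟩
    obtain ⟨A₁, B₁, hc, hr, hs, hin, hnotin⟩ :=
      main_construction n m hn B A hB hA h0B (by omega) (Ne.symm hne)
    refine ⟨B₁, A₁, hc.symm, fun h => hr ⟨h.2, h.1⟩, by rw [← hc]; omega, ?_, ?_⟩
    · exact inOmega_swap (X := (A₁, B₁)) (Y := (B, A)) hin
    · intro h
      exact hnotin (inOmega_swap (X := (B₁, A₁)) (Y := (B, A)) h)
end

section
/- Let Z be a special symbol of defect 1 with set of singular entries Z_I partitioned so that (Z_I)^* and (Z_I)_* have sizes differing appropriately, and let Φ be an arrangement of Z (a partition of Z_I into deg(Z) pairs, each containing one element of (Z_I)^* and one of (Z_I)_*, plus one isolated element). For subsets of pairs Ψ_1 ≠ Ψ_2 of Φ, the cells C_{Φ,Ψ_1} and C_{Φ,Ψ_2} are disjoint. -/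
variable {α : Type*} [DecidableEq α]

/-- The set of elements occurring in a set of pairs. -/
def pairUnion (S : Finset (α × α)) : Finset α :=
  S.image Prod.fst ∪ S.image Prod.snd

/-- `Φ` is an arrangement of `ZI` (defect-1 case): a partition of `ZI` into pairs,
each consisting of one element of the top part `top` and one of the bottom part
`ZI \ top`, together with one isolated element `z₀`. -/
def IsArrangement1 (ZI top : Finset α) (Φ : Finset (α × α)) (z₀ : α) : Prop :=
  top ⊆ ZI ∧ z₀ ∈ ZI ∧ z₀ ∉ pairUnion Φ ∧
  (∀ p ∈ Φ, p.1 ∈ top ∧ p.2 ∈ ZI \ top) ∧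
  (∀ x ∈ ZI, x ≠ z₀ → ∃! p, p ∈ Φ ∧ (x = p.1 ∨ x = p.2))

/-- The cell `C_{Φ,Ψ}` in the defect-1 case: subsets `M ⊆ ZI` of even cardinality
such that for every subset of pairs `Ψ' ≤ Φ`,
`|M ∩ Ψ'| ≡ |(Φ∖Ψ) ∩ Ψ'^*| (mod 2)`, where `Ψ'` is regarded as the union of its
pairs and `Ψ'^* = Ψ' ∩ top`. -/
def cell1 (ZI top : Finset α) (Φ Ψ : Finset (α × α)) : Set (Finset α) :=
  { M | M ⊆ ZI ∧ Even M.card ∧ ∀ Ψ' ⊆ Φ,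
      (M ∩ pairUnion Ψ').card % 2
        = (pairUnion (Φ \ Ψ) ∩ (pairUnion Ψ' ∩ top)).card % 2 }

lemma mem_pairUnion {S : Finset (α × α)} {x : α} :
    x ∈ pairUnion S ↔ ∃ p ∈ S, x = p.1 ∨ x = p.2 := by
  simp only [pairUnion, Finset.mem_union, Finset.mem_image]
  constructor
  · rintro (⟨p, hp, rfl⟩ | ⟨p, hp, rfl⟩)
    · exact ⟨p, hp, Or.inl rfl⟩
    · exact ⟨p, hp, Or.inr rfl⟩
  · rintro ⟨p, hp, rfl | rfl⟩
    · exact Or.inl ⟨p, hp, rfl⟩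
    · exact Or.inr ⟨p, hp, rfl⟩

lemma fst_mem_sdiff_iff {ZI top : Finset α} {Φ : Finset (α × α)} {z₀ : α}
    (hΦ : IsArrangement1 ZI top Φ z₀) {Ψ : Finset (α × α)}
    {p : α × α} (hp : p ∈ Φ) :
    p.1 ∈ pairUnion (Φ \ Ψ) ↔ p ∉ Ψ := by
  obtain ⟨htop, hz, hzn, hpair, huniq⟩ := hΦ
  constructor
  · intro h hpΨ
    obtain ⟨q, hq, hq2⟩ := mem_pairUnion.mp h
    rw [Finset.mem_sdiff] at hq
    have hp1top : p.1 ∈ top := (hpair p hp).1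
    have hp1ZI : p.1 ∈ ZI := htop hp1top
    have hp1z : p.1 ≠ z₀ := by
      rintro rfl
      exact hzn (mem_pairUnion.mpr ⟨p, hp, Or.inl rfl⟩)
    obtain ⟨r, hr, hru⟩ := huniq p.1 hp1ZI hp1z
    have : q = p := (hru q ⟨hq.1, hq2⟩).trans (hru p ⟨hp, Or.inl rfl⟩).symm
    exact hq.2 (this ▸ hpΨ)
  · intro h
    exact mem_pairUnion.mpr ⟨p, Finset.mem_sdiff.mpr ⟨hp, h⟩, Or.inl rfl⟩

lemma key_aux {ZI top : Finset α} {Φ : Finset (α × α)} {z₀ : α}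
    (hΦ : IsArrangement1 ZI top Φ z₀)
    {Ψ₁ Ψ₂ : Finset (α × α)} (h1 : Ψ₁ ⊆ Φ) (h2 : Ψ₂ ⊆ Φ)
    {p : α × α} (hp1 : p ∈ Ψ₁) (hp2 : p ∉ Ψ₂)
    {M : Finset α} (hM1 : M ∈ cell1 ZI top Φ Ψ₁) (hM2 : M ∈ cell1 ZI top Φ Ψ₂) :
    False := by
  have hpΦ : p ∈ Φ := h1 hp1
  have hp1top : p.1 ∈ top := (hΦ.2.2.2.1 p hpΦ).1
  have hp2top : p.2 ∉ top := (Finset.mem_sdiff.mp (hΦ.2.2.2.1 p hpΦ).2).2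
  have hsub : ({p} : Finset (α × α)) ⊆ Φ := Finset.singleton_subset_iff.mpr hpΦ
  have e1 := hM1.2.2 {p} hsub
  have e2 := hM2.2.2 {p} hsub
  have hstar : pairUnion {p} ∩ top = {p.1} := by
    ext x
    simp only [Finset.mem_inter, mem_pairUnion, Finset.mem_singleton]
    constructor
    · rintro ⟨⟨q, rfl, rfl | rfl⟩, hxt⟩
      · rfl
      · exact absurd hxt hp2top
    · rintro rfl
      exact ⟨⟨p, rfl, Or.inl rfl⟩, hp1top⟩
  rw [hstar] at e1 e2
  have c1 : pairUnion (Φ \ Ψ₁) ∩ {p.1} = ∅ := by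
    rw [Finset.eq_empty_iff_forall_notMem]
    intro x hx
    rw [Finset.mem_inter, Finset.mem_singleton] at hx
    obtain ⟨hx1, rfl⟩ := hx
    exact ((fst_mem_sdiff_iff hΦ hpΦ).mp hx1) hp1
  have c2 : pairUnion (Φ \ Ψ₂) ∩ {p.1} = {p.1} := by
    rw [Finset.inter_eq_right, Finset.singleton_subset_iff]
    exact (fst_mem_sdiff_iff hΦ hpΦ).mpr hp2
  rw [c1] at e1
  rw [c2] at e2
  rw [e1] at e2
  simp at e2

/-- In the defect-1 case, distinct subsets of pairs give disjoint cells. -/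
theorem stmt10 (ZI top : Finset α) (Φ : Finset (α × α)) (z₀ : α)
    (hΦ : IsArrangement1 ZI top Φ z₀)
    (Ψ₁ Ψ₂ : Finset (α × α)) (h1 : Ψ₁ ⊆ Φ) (h2 : Ψ₂ ⊆ Φ) (hne : Ψ₁ ≠ Ψ₂) :
    cell1 ZI top Φ Ψ₁ ∩ cell1 ZI top Φ Ψ₂ = ∅ := by
  rw [Set.eq_empty_iff_forall_notMem]
  rintro M ⟨hM1, hM2⟩
  by_cases hs : Ψ₁ ⊆ Ψ₂
  · have : ¬ Ψ₂ ⊆ Ψ₁ := fun h => hne (Finset.Subset.antisymm hs h)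
    obtain ⟨p, hp2, hp1⟩ := Finset.not_subset.mp this
    exact key_aux hΦ h2 h1 hp2 hp1 hM2 hM1
  · obtain ⟨p, hp1, hp2⟩ := Finset.not_subset.mp hs
    exact key_aux hΦ h1 h2 hp1 hp2 hM1 hM2
end

section
/- With Z_I, Φ, and cells C_{Φ,Ψ} as in the defect-0 setting: for any two subsets M_1, M_2 ⊆ Z_I with M_1 ∉ {M_2, Z_I ∖ M_2}, there exist subsets of pairs Ψ_1, Ψ_2 ≤ Φ (for a suitable arrangement Φ) with M_i ∈ C_{Φ,Ψ_i} for i = 1,2 and C_{Φ,Ψ_1} ∩ C_{Φ,Ψ_2} = ∅. -/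
variable {α : Type*} [DecidableEq α]

/-- `Φ` is an arrangement of `ZI` (defect-0 case): a partition of `ZI` into pairs,
each consisting of one element of the top part `top` and one of `ZI \ top`. -/
def IsArrangement0 (ZI top : Finset α) (Φ : Finset (α × α)) : Prop :=
  top ⊆ ZI ∧ (∀ p ∈ Φ, p.1 ∈ top ∧ p.2 ∈ ZI \ top) ∧
  (∀ x ∈ ZI, ∃! p, p ∈ Φ ∧ (x = p.1 ∨ x = p.2))

/-- The cell `C_{Φ,Ψ}` in the defect-0 case: subsets `M ⊆ ZI` such that for every
subset of pairs `Ψ' ≤ Φ`, `|M ∩ Ψ'| ≡ |(Φ∖Ψ) ∩ Ψ'^*| (mod 2)`, where `Ψ'` is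
regarded as the union of its pairs and `Ψ'^* = Ψ' ∩ top`. -/
def cell0 (ZI top : Finset α) (Φ Ψ : Finset (α × α)) : Set (Finset α) :=
  { M | M ⊆ ZI ∧ ∀ Ψ' ⊆ Φ,
      (M ∩ pairUnion Ψ').card % 2
        = (pairUnion (Φ \ Ψ) ∩ (pairUnion Ψ' ∩ top)).card % 2 }

lemma pairUnion_eq_biUnion (S : Finset (α × α)) :
    pairUnion S = S.biUnion (fun p => {p.1, p.2}) := by
  ext x
  constructor
  · intro hx
    rcases Finset.mem_union.1 hx with h | h <;>
    · obtain ⟨p, hp, rfl⟩ := Finset.mem_image.1 h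
      exact Finset.mem_biUnion.2 ⟨p, hp, by simp⟩
  · intro hx
    obtain ⟨p, hp, hxp⟩ := Finset.mem_biUnion.1 hx
    rcases Finset.mem_insert.1 hxp with rfl | hxp
    · exact Finset.mem_union_left _ (Finset.mem_image_of_mem _ hp)
    · rw [Finset.mem_singleton.1 hxp]
      exact Finset.mem_union_right _ (Finset.mem_image_of_mem _ hp)

section Arr
variable {ZI top : Finset α} {Φ : Finset (α × α)} (h : IsArrangement0 ZI top Φ)
include h

lemma pair_subset_ZI {p : α × α} (hp : p ∈ Φ) :
    p.1 ∈ ZI ∧ p.2 ∈ ZI := by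
  obtain ⟨h1, h2, _⟩ := h
  exact ⟨h1 (h2 p hp).1, (Finset.mem_sdiff.1 (h2 p hp).2).1⟩

lemma pair_disj {p q : α × α} (hp : p ∈ Φ) (hq : q ∈ Φ) (hne : p ≠ q) :
    Disjoint ({p.1, p.2} : Finset α) {q.1, q.2} := by
  rw [Finset.disjoint_left]
  intro x hxp hxq
  have hxZI : x ∈ ZI := by
    rcases Finset.mem_insert.1 hxp with rfl | hxp
    · exact (pair_subset_ZI h hp).1
    · rw [Finset.mem_singleton.1 hxp]; exact (pair_subset_ZI h hp).2
  obtain ⟨_, _, h3⟩ := h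
  obtain ⟨r, _, hu⟩ := h3 x hxZI
  have e1 : p = r := hu p ⟨hp, by simpa [eq_comm] using Finset.mem_insert.1 hxp⟩
  have e2 : q = r := hu q ⟨hq, by simpa [eq_comm] using Finset.mem_insert.1 hxq⟩
  exact hne (e1.trans e2.symm)

lemma card_inter_pairUnion (T : Finset α) {Ψ' : Finset (α × α)} (hΨ' : Ψ' ⊆ Φ) :
    (T ∩ pairUnion Ψ').card = ∑ p ∈ Ψ', (T ∩ {p.1, p.2}).card := by
  rw [pairUnion_eq_biUnion]
  have : T ∩ Ψ'.biUnion (fun p => {p.1, p.2})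
      = Ψ'.biUnion (fun p => T ∩ {p.1, p.2}) := by
    ext x; simp only [Finset.mem_inter, Finset.mem_biUnion]; tauto
  rw [this, Finset.card_biUnion]
  intro p hp q hq hpq
  exact Finset.disjoint_of_subset_left Finset.inter_subset_right
    (Finset.disjoint_of_subset_right Finset.inter_subset_right
      (pair_disj h (hΨ' hp) (hΨ' hq) hpq))

lemma rhs_pair {p : α × α} (hp : p ∈ Φ) (Ψ : Finset (α × α)) :
    pairUnion (Φ \ Ψ) ∩ ({p.1, p.2} ∩ top) = if p ∈ Ψ then ∅ else {p.1} := by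
  obtain ⟨h1, h2, h3⟩ := h
  have hp1 : p.1 ∈ top := (h2 p hp).1
  have hp2 : p.2 ∉ top := (Finset.mem_sdiff.1 (h2 p hp).2).2
  have hpt : ({p.1, p.2} : Finset α) ∩ top = {p.1} := by
    ext x
    simp only [Finset.mem_inter, Finset.mem_insert, Finset.mem_singleton]
    constructor
    · rintro ⟨rfl | rfl, hx⟩
      · rfl
      · exact absurd hx hp2
    · rintro rfl; exact ⟨Or.inl rfl, hp1⟩
  rw [hpt]
  have key : p.1 ∈ pairUnion (Φ \ Ψ) ↔ p ∉ Ψ := by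
    rw [mem_pairUnion]
    constructor
    · rintro ⟨q, hq, hq1⟩
      have hqΦ := (Finset.mem_sdiff.1 hq).1
      obtain ⟨r, -, hu⟩ := h3 p.1 (h1 hp1)
      have e1 : p = r := hu p ⟨hp, Or.inl rfl⟩
      have e2 : q = r := hu q ⟨hqΦ, hq1⟩
      rw [e1, ← e2]
      exact (Finset.mem_sdiff.1 hq).2
    · intro hpΨ
      exact ⟨p, Finset.mem_sdiff.2 ⟨hp, hpΨ⟩, Or.inl rfl⟩
  split_ifs with hmem
  · rw [Finset.eq_empty_iff_forall_notMem]
    intro x hx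
    obtain ⟨hx1, hx2⟩ := Finset.mem_inter.1 hx
    rw [Finset.mem_singleton.1 hx2] at hx1
    exact (key.1 hx1) hmem
  · rw [Finset.inter_eq_right.2]
    intro x hx
    rw [Finset.mem_singleton.1 hx]
    exact key.2 hmem

omit h in
lemma pairUnion_singleton (p : α × α) : pairUnion {p} = {p.1, p.2} := by
  ext x; simp [mem_pairUnion]

lemma mem_cell0_iff {Ψ : Finset (α × α)} (hΨ : Ψ ⊆ Φ) {M : Finset α} (hM : M ⊆ ZI) :
    M ∈ cell0 ZI top Φ Ψ ↔
      ∀ p ∈ Φ, (M ∩ {p.1, p.2}).card % 2 = if p ∈ Ψ then 0 else 1 := by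
  constructor
  · intro hMc p hp
    have h2 := hMc.2 {p} (Finset.singleton_subset_iff.2 hp)
    rw [pairUnion_singleton, rhs_pair h hp Ψ] at h2
    rw [h2]
    split_ifs <;> simp
  · intro hall
    refine ⟨hM, fun Ψ' hΨ' => ?_⟩
    have hL := card_inter_pairUnion h M hΨ'
    have hR : (pairUnion (Φ \ Ψ) ∩ (pairUnion Ψ' ∩ top)).card
        = ∑ p ∈ Ψ', (if p ∈ Ψ then 0 else 1) := by
      have e1 : pairUnion (Φ \ Ψ) ∩ (pairUnion Ψ' ∩ top)
          = (pairUnion (Φ \ Ψ) ∩ top) ∩ pairUnion Ψ' := by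
        ext x; simp only [Finset.mem_inter]; tauto
      rw [e1, card_inter_pairUnion h _ hΨ']
      refine Finset.sum_congr rfl fun p hp => ?_
      have e2 : pairUnion (Φ \ Ψ) ∩ top ∩ {p.1, p.2}
          = pairUnion (Φ \ Ψ) ∩ ({p.1, p.2} ∩ top) := by
        ext x; simp only [Finset.mem_inter]; tauto
      rw [e2, rhs_pair h (hΨ' hp) Ψ]
      split_ifs <;> simp
    rw [hL, hR, Finset.sum_nat_mod, Finset.sum_nat_mod (s := Ψ') (f := fun p => if p ∈ Ψ then 0 else 1)]
    congr 1
    refine Finset.sum_congr rfl fun p hp => ?_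
    rw [hall p (hΨ' hp)]
    split_ifs <;> rfl

lemma cell0_disjoint {Ψ₁ Ψ₂ : Finset (α × α)} (h₁ : Ψ₁ ⊆ Φ) (h₂ : Ψ₂ ⊆ Φ)
    (hne : Ψ₁ ≠ Ψ₂) : cell0 ZI top Φ Ψ₁ ∩ cell0 ZI top Φ Ψ₂ = ∅ := by
  rw [Set.eq_empty_iff_forall_notMem]
  rintro M ⟨hc1, hc2⟩
  obtain ⟨p, hpΦ, hpd⟩ : ∃ p ∈ Φ, ¬(p ∈ Ψ₁ ↔ p ∈ Ψ₂) := by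
    by_contra hc
    push_neg at hc
    exact hne (Finset.ext fun p => by
      constructor
      · intro hp; exact ((hc p (h₁ hp)).1 hp)
      · intro hp; exact ((hc p (h₂ hp)).2 hp))
  have e1 := (mem_cell0_iff h h₁ hc1.1).1 hc1 p hpΦ
  have e2 := (mem_cell0_iff h h₂ hc2.1).1 hc2 p hpΦ
  rw [e1] at e2
  by_cases hp1 : p ∈ Ψ₁ <;> by_cases hp2 : p ∈ Ψ₂ <;> simp_all

end Arr

lemma exists_arrangement0 {ZI top : Finset α} (htop : top ⊆ ZI)
    (hcard : top.card = (ZI \ top).card) {a b : α}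
    (ha : a ∈ top) (hb : b ∈ ZI \ top) :
    ∃ Φ : Finset (α × α), IsArrangement0 ZI top Φ ∧ (a, b) ∈ Φ := by
  set bot := ZI \ top with hbot
  have hcard' : (top.erase a).card = (bot.erase b).card := by
    rw [Finset.card_erase_of_mem ha, Finset.card_erase_of_mem hb, hcard]
  let e : {x // x ∈ top.erase a} ≃ {x // x ∈ bot.erase b} := Finset.equivOfCardEq hcard'
  set Φ : Finset (α × α) :=
    insert (a, b) ((top.erase a).attach.image
      fun (x : {x // x ∈ top.erase a}) => ((x : α), (e x : α))) with hΦ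
  have hab : (a, b) ∈ Φ := Finset.mem_insert_self _ _
  -- description of members
  have hdesc : ∀ p ∈ Φ, p = (a, b) ∨
      ∃ hx : p.1 ∈ top.erase a, p.2 = (e ⟨p.1, hx⟩ : α) := by
    intro p hp
    rcases Finset.mem_insert.1 hp with hp | hp
    · exact Or.inl hp
    · obtain ⟨x, _, hfx⟩ := Finset.mem_image.1 hp
      right
      have h1 : p.1 = (x : α) := by rw [← hfx]
      refine ⟨h1 ▸ x.2, ?_⟩
      have : (⟨p.1, h1 ▸ x.2⟩ : {x // x ∈ top.erase a}) = x := Subtype.ext h1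
      rw [this, ← hfx]
  have hmem : ∀ p ∈ Φ, p.1 ∈ top ∧ p.2 ∈ bot := by
    intro p hp
    rcases hdesc p hp with rfl | ⟨hx, h2⟩
    · exact ⟨ha, hb⟩
    · exact ⟨Finset.mem_of_mem_erase hx,
        Finset.mem_of_mem_erase ((h2 ▸ (e ⟨p.1, hx⟩).2))⟩
  have hfst : ∀ p ∈ Φ, ∀ q ∈ Φ, p.1 = q.1 → p = q := by
    intro p hp q hq hpq
    rcases hdesc p hp with rfl | ⟨hx, h2⟩ <;> rcases hdesc q hq with rfl | ⟨hy, h3⟩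
    · rfl
    · exact absurd (hpq ▸ hy) (by simp)
    · exact absurd (hpq ▸ hx) (by simp)
    · have : (⟨p.1, hx⟩ : {x // x ∈ top.erase a}) = ⟨q.1, hy⟩ := Subtype.ext hpq
      exact Prod.ext hpq (by rw [h2, h3, this])
  have hsnd : ∀ p ∈ Φ, ∀ q ∈ Φ, p.2 = q.2 → p = q := by
    intro p hp q hq hpq
    rcases hdesc p hp with rfl | ⟨hx, h2⟩ <;> rcases hdesc q hq with rfl | ⟨hy, h3⟩
    · rfl
    · have hb' : b = q.2 := hpq
      have hne : q.2 ≠ b := Finset.ne_of_mem_erase (by rw [h3]; exact (e ⟨q.1, hy⟩).2)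
      exact absurd hb'.symm hne
    · have hb' : p.2 = b := hpq
      have hne : p.2 ≠ b := Finset.ne_of_mem_erase (by rw [h2]; exact (e ⟨p.1, hx⟩).2)
      exact absurd hb' hne
    · have hsub : (e ⟨p.1, hx⟩) = (e ⟨q.1, hy⟩) := Subtype.ext (by rw [← h2, ← h3, hpq])
      have : (⟨p.1, hx⟩ : {x // x ∈ top.erase a}) = ⟨q.1, hy⟩ := e.injective hsub
      exact hfst p hp q hq (congrArg Subtype.val this)
  have hdisj : ∀ x ∈ top, x ∉ bot := fun x hx => by simp [hbot, hx]
  refine ⟨Φ, ⟨htop, fun p hp => ⟨(hmem p hp).1, (hmem p hp).2⟩, ?_⟩, hab⟩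
  intro x hx
  -- existence
  have hexists : ∃ p, p ∈ Φ ∧ (x = p.1 ∨ x = p.2) := by
    by_cases hxt : x ∈ top
    · by_cases hxa : x = a
      · exact ⟨(a, b), hab, Or.inl hxa⟩
      · have hxe : x ∈ top.erase a := Finset.mem_erase.2 ⟨hxa, hxt⟩
        refine ⟨((x : α), (e ⟨x, hxe⟩ : α)), ?_, Or.inl rfl⟩
        exact Finset.mem_insert_of_mem (Finset.mem_image.2
          ⟨⟨x, hxe⟩, Finset.mem_attach _ _, rfl⟩)
    · have hxb : x ∈ bot := Finset.mem_sdiff.2 ⟨hx, hxt⟩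
      by_cases hxB : x = b
      · exact ⟨(a, b), hab, Or.inr hxB⟩
      · have hxe : x ∈ bot.erase b := Finset.mem_erase.2 ⟨hxB, hxb⟩
        set y : {x // x ∈ top.erase a} := e.symm ⟨x, hxe⟩ with hy
        refine ⟨((y : α), (e y : α)), ?_, Or.inr ?_⟩
        · exact Finset.mem_insert_of_mem (Finset.mem_image.2
            ⟨y, Finset.mem_attach _ _, rfl⟩)
        · rw [hy, e.apply_symm_apply]
  obtain ⟨p, hpΦ, hpx⟩ := hexists
  refine ⟨p, ⟨hpΦ, hpx⟩, ?_⟩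
  rintro q ⟨hqΦ, hqx⟩
  by_cases hxt : x ∈ top
  · have hx1 : x = q.1 := by
      rcases hqx with h | h
      · exact h
      · exact absurd (by rw [h]; exact (hmem q hqΦ).2 : x ∈ bot) (hdisj x hxt)
    have hx2 : x = p.1 := by
      rcases hpx with h | h
      · exact h
      · exact absurd (by rw [h]; exact (hmem p hpΦ).2 : x ∈ bot) (hdisj x hxt)
    exact hfst q hqΦ p hpΦ (hx1.symm.trans hx2)
  · have hx1 : x = q.2 := by
      rcases hqx with h | h
      · exact absurd (by rw [h]; exact (hmem q hqΦ).1 : x ∈ top) hxt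
      · exact h
    have hx2 : x = p.2 := by
      rcases hpx with h | h
      · exact absurd (by rw [h]; exact (hmem p hpΦ).1 : x ∈ top) hxt
      · exact h
    exact hsnd q hqΦ p hpΦ (hx1.symm.trans hx2)

/-- Defect-0 separation of cells: if `M₁, M₂ ⊆ ZI` with `M₁ ∉ {M₂, ZI ∖ M₂}`, then for
a suitable arrangement `Φ` there are subsets of pairs `Ψ₁, Ψ₂ ≤ Φ` with
`Mᵢ ∈ C_{Φ,Ψᵢ}` and `C_{Φ,Ψ₁} ∩ C_{Φ,Ψ₂} = ∅`. -/
theorem stmt12 (d : ℕ) (ZI top : Finset α)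
    (htop : top ⊆ ZI) (hd : top.card = d) (hZI : ZI.card = 2 * d)
    (M₁ M₂ : Finset α) (hM₁ : M₁ ⊆ ZI) (hM₂ : M₂ ⊆ ZI)
    (hne : M₁ ≠ M₂) (hne' : M₁ ≠ ZI \ M₂) :
    ∃ (Φ Ψ₁ Ψ₂ : Finset (α × α)), IsArrangement0 ZI top Φ ∧
      Ψ₁ ⊆ Φ ∧ Ψ₂ ⊆ Φ ∧
      M₁ ∈ cell0 ZI top Φ Ψ₁ ∧ M₂ ∈ cell0 ZI top Φ Ψ₂ ∧
      cell0 ZI top Φ Ψ₁ ∩ cell0 ZI top Φ Ψ₂ = ∅ := by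
  -- setup
  have hd0 : d ≠ 0 := by
    rintro rfl
    have : ZI = ∅ := Finset.card_eq_zero.1 (by omega)
    subst this
    exact hne (by
      rw [Finset.subset_empty.1 hM₁, Finset.subset_empty.1 hM₂])
  have hbotcard : (ZI \ top).card = d := by
    rw [Finset.card_sdiff_of_subset htop, hZI, hd]; omega
  have hcard : top.card = (ZI \ top).card := by rw [hd, hbotcard]
  have htopne : top.Nonempty := Finset.card_pos.1 (by omega)
  have hbotne : (ZI \ top).Nonempty := Finset.card_pos.1 (by omega)
  set bot := ZI \ top with hbotdef
  set S : Finset α := (M₁ \ M₂) ∪ (M₂ \ M₁) with hS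
  have hSmem : ∀ x, x ∈ S ↔ ¬(x ∈ M₁ ↔ x ∈ M₂) := by
    intro x
    simp only [hS, Finset.mem_union, Finset.mem_sdiff]
    tauto
  have hSZI : S ⊆ ZI := Finset.union_subset
    (Finset.Subset.trans (Finset.sdiff_subset) hM₁)
    (Finset.Subset.trans (Finset.sdiff_subset) hM₂)
  have hSne : S.Nonempty := by
    rcases Finset.eq_empty_or_nonempty S with hSe | hSn
    · exfalso
      apply hne
      ext x
      have := hSmem x
      rw [hSe] at this
      simp at this
      tauto
    · exact hSn
  have hSneZI : S ≠ ZI := by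
    intro hSeq
    apply hne'
    ext x
    simp only [Finset.mem_sdiff]
    constructor
    · intro hx
      have hxZ : x ∈ ZI := hM₁ hx
      have hxS : x ∈ S := hSeq ▸ hxZ
      rw [hSmem x] at hxS
      exact ⟨hxZ, fun hx2 => hxS ⟨fun _ => hx2, fun _ => hx⟩⟩
    · rintro ⟨hxZ, hx2⟩
      have hxS : x ∈ S := hSeq ▸ hxZ
      rw [hSmem x] at hxS
      by_contra hx1
      exact hxS ⟨fun h => absurd h hx1, fun h => absurd h hx2⟩
  -- find a ∈ top, b ∈ bot with exactly one in S
  obtain ⟨a, ha, b, hb, hsplit⟩ :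
      ∃ a ∈ top, ∃ b ∈ bot, (a ∈ S ∧ b ∉ S) ∨ (a ∉ S ∧ b ∈ S) := by
    by_cases hts : ∃ x ∈ top, x ∈ S
    · obtain ⟨a, ha, haS⟩ := hts
      by_cases hbs : ∃ y ∈ bot, y ∉ S
      · obtain ⟨b, hb, hbS⟩ := hbs
        exact ⟨a, ha, b, hb, Or.inl ⟨haS, hbS⟩⟩
      · push_neg at hbs
        by_cases hts' : ∃ x ∈ top, x ∉ S
        · obtain ⟨a', ha', ha'S⟩ := hts'
          obtain ⟨b, hb⟩ := hbotne
          exact ⟨a', ha', b, hb, Or.inr ⟨ha'S, hbs b hb⟩⟩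
        · push_neg at hts'
          exfalso
          apply hSneZI
          apply Finset.Subset.antisymm hSZI
          intro x hx
          by_cases hxt : x ∈ top
          · exact hts' x hxt
          · exact hbs x (Finset.mem_sdiff.2 ⟨hx, hxt⟩)
    · push_neg at hts
      obtain ⟨s, hs⟩ := hSne
      have hsZ : s ∈ ZI := hSZI hs
      have hsb : s ∈ bot := Finset.mem_sdiff.2 ⟨hsZ, fun h => hts s h hs⟩
      obtain ⟨a, ha⟩ := htopne
      exact ⟨a, ha, s, hsb, Or.inr ⟨hts a ha, hs⟩⟩
  -- get the arrangement
  obtain ⟨Φ, hΦ, habΦ⟩ := exists_arrangement0 htop hcard ha hb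
  -- parity at the special pair differs
  have hab : a ≠ b := by
    intro h
    rw [h] at ha
    exact (Finset.mem_sdiff.1 hb).2 ha
  have hcardpair : ∀ M : Finset α,
      (M ∩ {a, b}).card = (if a ∈ M then 1 else 0) + (if b ∈ M then 1 else 0) := by
    intro M
    rw [Finset.inter_comm, ← Finset.filter_mem_eq_inter, Finset.card_filter,
      Finset.sum_pair hab]
  have hparity : (M₁ ∩ {a, b}).card % 2 ≠ (M₂ ∩ {a, b}).card % 2 := by
    rw [hcardpair M₁, hcardpair M₂]
    rcases hsplit with ⟨haS, hbS⟩ | ⟨haS, hbS⟩ <;>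
      [skip; skip] <;>
    · rw [hSmem] at haS hbS
      by_cases h1 : a ∈ M₁ <;> by_cases h2 : a ∈ M₂ <;>
        by_cases h3 : b ∈ M₁ <;> by_cases h4 : b ∈ M₂ <;> simp_all
  -- define the Ψ's
  set Ψ₁ : Finset (α × α) := Φ.filter (fun p => (M₁ ∩ {p.1, p.2}).card % 2 = 0) with hΨ₁
  set Ψ₂ : Finset (α × α) := Φ.filter (fun p => (M₂ ∩ {p.1, p.2}).card % 2 = 0) with hΨ₂
  have hΨ₁Φ : Ψ₁ ⊆ Φ := Finset.filter_subset _ _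
  have hΨ₂Φ : Ψ₂ ⊆ Φ := Finset.filter_subset _ _
  have hmemcell : ∀ (M : Finset α), M ⊆ ZI →
      M ∈ cell0 ZI top Φ (Φ.filter (fun p => (M ∩ {p.1, p.2}).card % 2 = 0)) := by
    intro M hM
    rw [mem_cell0_iff hΦ (Finset.filter_subset _ _) hM]
    intro p hp
    split_ifs with hm
    · exact (Finset.mem_filter.1 hm).2
    · have : ¬(M ∩ {p.1, p.2}).card % 2 = 0 :=
        fun h => hm (Finset.mem_filter.2 ⟨hp, h⟩)
      omega
  have hΨne : Ψ₁ ≠ Ψ₂ := by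
    intro heq
    apply hparity
    have h1 : ((a, b) ∈ Ψ₁) ↔ ((a, b) ∈ Ψ₂) := by rw [heq]
    rw [hΨ₁, hΨ₂, Finset.mem_filter, Finset.mem_filter] at h1
    simp only [habΦ, true_and] at h1
    have hL := (M₁ ∩ {a, b}).card % 2
    by_cases c1 : (M₁ ∩ {a, b}).card % 2 = 0 <;>
      by_cases c2 : (M₂ ∩ {a, b}).card % 2 = 0
    · omega
    · exact absurd (h1.1 c1) c2
    · exact absurd (h1.2 c2) c1
    · omega
  exact ⟨Φ, Ψ₁, Ψ₂, hΦ, hΨ₁Φ, hΨ₂Φ, hmemcell M₁ hM₁, hmemcell M₂ hM₂,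
    cell0_disjoint hΦ hΨ₁Φ hΨ₂Φ hΨne⟩
end
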